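/- arXiv:0912.1185 — 5 statements merged into one kernel-verified Lean document; each statement's English description precedes it below -/
import Mathlib

section
/- Let A ∈ ℂ^{m×n}, b ∈ ℂ^m, μ > 0, β > 0, and let τ, γ > 0 satisfy τ·λ_max + γ < 2, where λ_max is the largest eigenvalue of A*A. Consider the primal alternating direction iteration: given (x^k, y^k), set r^{k+1} = (μβ/(1+μβ))·(y^k/β − (A x^k − b)), then g^k = A*(A x^k + r^{k+1} − b − y^k/β), then x^{k+1} = Shrink(x^k − τ g^k, τ/β), then y^{k+1} = y^k − γβ(A x^{k+1} + r^{k+1} − b). Then for any starting point (x^0, y^0), the sequence (r^k, x^k, y^k) converges to a limit (r̃, x̃, ỹ), where (r̃, x̃) is a solution of the problem min over (x, r) ∈ ℂ^n × ℂ^m of ‖x‖₁ + (1/(2μ))‖r‖₂² subject to A x + r = b. -/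
open Filter Topology Matrix Finset

noncomputable def l1 {ι : Type*} [Fintype ι] (v : ι → ℂ) : ℝ := ∑ i, ‖v i‖

noncomputable def l2sq {ι : Type*} [Fintype ι] (v : ι → ℂ) : ℝ := ∑ i, (‖v i‖)^2

noncomputable def l2 {ι : Type*} [Fintype ι] (v : ι → ℂ) : ℝ := Real.sqrt (l2sq v)

noncomputable def linf {ι : Type*} [Fintype ι] (v : ι → ℂ) : ℝ := ⨆ i, ‖v i‖

noncomputable def csign (w : ℂ) : ℂ := if w = 0 then 0 else w / (‖w‖ : ℂ)

noncomputable def shrink {ι : Type*} [Fintype ι] (z : ι → ℂ) (ν : ℝ) : ι → ℂ :=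
  fun i => ((max (‖z i‖ - ν) 0 : ℝ) : ℂ) * csign (z i)

noncomputable def reInner {ι : Type*} [Fintype ι] (y v : ι → ℂ) : ℝ :=
  (∑ i, (starRingEnd ℂ) (y i) * v i).re

noncomputable def projBall {ι : Type*} [Fintype ι] (t : ℝ) (v : ι → ℂ) : ι → ℂ :=
  if l2 v ≤ t then v else (t / l2 v) • v

noncomputable def projBox {ι : Type*} [Fintype ι] (v : ι → ℂ) : ι → ℂ :=
  fun i => if ‖v i‖ ≤ 1 then v i else v i / (‖v i‖ : ℂ)

noncomputable def lmax {m n : ℕ} (A : Matrix (Fin m) (Fin n) ℂ) : ℝ :=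
  ⨆ i, (Matrix.isHermitian_conjTranspose_mul_self A).eigenvalues i

/-!
Fix a KKT pair `(x⋆, y⋆)` of the quadratic program; it exists because the objective is coercive,
and it solves the program with `r⋆ = μ y⋆`. One step of the iteration decreases the weighted
distance `(β/τ)‖x - x⋆‖² + (1/(γβ))‖y - y⋆‖²` by a positive multiple of
`‖xᵏ - xᵏ⁺¹‖² + ‖A xᵏ⁺¹ + rᵏ⁺¹ - b‖² + ‖rᵏ⁺¹ - μ y⋆‖²`: this combines the variational inequality
of `Shrink` as the proximal map of `‖·‖₁`, the subgradient condition at `x⋆`, and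
`‖A u‖² ≤ λ_max ‖u‖²` with a Young inequality whose weight exists exactly when
`τ λ_max + γ < 2`. Hence the iterates are bounded and the three residuals vanish, so every cluster
point of `(xᵏ, yᵏ)` is again a KKT pair. Since the distance to that cluster point is
nonincreasing and tends to zero along a subsequence, the whole sequence converges to it.
-/

section Norms

variable {ι : Type*} [Fintype ι]

lemma reInner_eq_re_dotProduct (y v : ι → ℂ) : reInner y v = (star y ⬝ᵥ v).re := rfl

lemma reInner_add_left (a b c : ι → ℂ) :
    reInner (a + b) c = reInner a c + reInner b c := by
  simp [reInner_eq_re_dotProduct, add_dotProduct]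

lemma reInner_add_right (a b c : ι → ℂ) :
    reInner a (b + c) = reInner a b + reInner a c := by
  simp [reInner_eq_re_dotProduct, dotProduct_add]

lemma reInner_sub_left (a b c : ι → ℂ) :
    reInner (a - b) c = reInner a c - reInner b c := by
  simp [reInner_eq_re_dotProduct, sub_dotProduct]

lemma reInner_sub_right (a b c : ι → ℂ) :
    reInner a (b - c) = reInner a b - reInner a c := by
  simp [reInner_eq_re_dotProduct, dotProduct_sub]

lemma reInner_neg_right (a b : ι → ℂ) : reInner a (-b) = -reInner a b := by
  simp [reInner_eq_re_dotProduct]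

lemma reInner_smul_left (t : ℝ) (a b : ι → ℂ) :
    reInner (t • a) b = t * reInner a b := by
  simp [reInner_eq_re_dotProduct, star_smul, smul_dotProduct]

lemma reInner_smul_right (t : ℝ) (a b : ι → ℂ) :
    reInner a (t • b) = t * reInner a b := by
  simp [reInner_eq_re_dotProduct, dotProduct_smul]

lemma reInner_comm (a b : ι → ℂ) : reInner a b = reInner b a := by
  simp only [reInner, Complex.re_sum]
  refine Finset.sum_congr rfl fun i _ => ?_
  rw [← Complex.conj_re, map_mul, Complex.conj_conj, mul_comm]

lemma reInner_self (a : ι → ℂ) : reInner a a = l2sq a := by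
  simp only [reInner, l2sq, Complex.re_sum, Complex.conj_mul', ← Complex.ofReal_pow,
    Complex.ofReal_re]

lemma l2sq_nonneg (v : ι → ℂ) : 0 ≤ l2sq v :=
  Finset.sum_nonneg fun _ _ => sq_nonneg _

lemma l2sq_add (a b : ι → ℂ) : l2sq (a + b) = l2sq a + 2 * reInner a b + l2sq b := by
  simp only [← reInner_self, reInner_add_left, reInner_add_right, reInner_comm b a]; ring

lemma l2sq_sub (a b : ι → ℂ) : l2sq (a - b) = l2sq a - 2 * reInner a b + l2sq b := by
  simp only [← reInner_self, reInner_sub_left, reInner_sub_right, reInner_comm b a]; ring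

lemma l2sq_smul (t : ℝ) (a : ι → ℂ) : l2sq (t • a) = t ^ 2 * l2sq a := by
  simp only [← reInner_self, reInner_smul_left, reInner_smul_right]; ring

lemma neg_two_mul_reInner_le {ρ : ℝ} (hρ : 0 < ρ) (a c : ι → ℂ) :
    -(2 * reInner a c) ≤ ρ * l2sq a + ρ⁻¹ * l2sq c := by
  have h := l2sq_nonneg (ρ • a + c)
  rw [l2sq_add, l2sq_smul, reInner_smul_left] at h
  have h' : 0 ≤ ρ⁻¹ * (ρ ^ 2 * l2sq a + 2 * (ρ * reInner a c) + l2sq c) :=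
    mul_nonneg (inv_nonneg.mpr hρ.le) h
  field_simp at h' ⊢
  linarith

lemma norm_le_sqrt_l2sq (v : ι → ℂ) : ‖v‖ ≤ √(l2sq v) :=
  (pi_norm_le_iff_of_nonneg (Real.sqrt_nonneg _)).mpr fun i =>
    Real.le_sqrt_of_sq_le (Finset.single_le_sum (f := fun j => ‖v j‖ ^ 2)
      (fun _ _ => sq_nonneg _) (Finset.mem_univ i))

lemma norm_le_l1 (v : ι → ℂ) : ‖v‖ ≤ l1 v :=
  (pi_norm_le_iff_of_nonneg (Finset.sum_nonneg fun _ _ => norm_nonneg _)).mpr fun i =>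
    Finset.single_le_sum (f := fun j => ‖v j‖) (fun _ _ => norm_nonneg _) (Finset.mem_univ i)

lemma l1_smul_add_smul_le (a c : ι → ℂ) {t : ℝ} (h0 : 0 ≤ t) (h1 : t ≤ 1) :
    l1 ((1 - t) • a + t • c) ≤ (1 - t) * l1 a + t * l1 c := by
  simp only [l1, Finset.mul_sum, ← Finset.sum_add_distrib]
  refine Finset.sum_le_sum fun i _ => (norm_add_le _ _).trans_eq ?_
  rw [Pi.smul_apply, Pi.smul_apply, norm_smul, norm_smul, Real.norm_of_nonneg (by linarith),
    Real.norm_of_nonneg h0]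

lemma continuous_l1 : Continuous (l1 (ι := ι)) := by
  unfold l1; fun_prop

lemma continuous_l2sq : Continuous (l2sq (ι := ι)) := by
  unfold l2sq; fun_prop

lemma continuous_reInner : Continuous fun p : (ι → ℂ) × (ι → ℂ) => reInner p.1 p.2 := by
  unfold reInner
  exact Complex.continuous_re.comp <| continuous_finsetSum _ fun i _ =>
    (Complex.continuous_conj.comp ((continuous_apply i).comp continuous_fst)).mul
      ((continuous_apply i).comp continuous_snd)

lemma Filter.Tendsto.reInner {α : Type*} {l : Filter α} {f g : α → ι → ℂ} {a c : ι → ℂ}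
    (hf : Tendsto f l (𝓝 a)) (hg : Tendsto g l (𝓝 c)) :
    Tendsto (fun k => reInner (f k) (g k)) l (𝓝 (reInner a c)) := by
  have h := (continuous_reInner.tendsto (a, c)).comp (hf.prodMk_nhds hg)
  exact h

lemma tendsto_nhds_of_l2sq_sub_tendsto_zero {α : Type*} {l : Filter α} {f : α → ι → ℂ}
    {a : ι → ℂ} (h : Tendsto (fun k => l2sq (f k - a)) l (𝓝 0)) : Tendsto f l (𝓝 a) := by
  rw [tendsto_iff_norm_sub_tendsto_zero]
  have hsqrt : Tendsto (fun k => √(l2sq (f k - a))) l (𝓝 0) := by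
    simpa [Function.comp_def] using (Real.continuous_sqrt.tendsto 0).comp h
  exact squeeze_zero (fun _ => norm_nonneg _) (fun k => norm_le_sqrt_l2sq _) hsqrt

end Norms

section MatrixBounds

variable {m n : Type*} [Fintype m] [Fintype n]

lemma reInner_mulVec (A : Matrix m n ℂ) (u : n → ℂ) (v : m → ℂ) :
    reInner (A *ᵥ u) v = reInner u (Aᴴ *ᵥ v) := by
  rw [reInner_eq_re_dotProduct, reInner_eq_re_dotProduct, star_mulVec, ← dotProduct_mulVec]

lemma reInner_mulVec_right (A : Matrix m n ℂ) (v : m → ℂ) (u : n → ℂ) :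
    reInner v (A *ᵥ u) = reInner (Aᴴ *ᵥ v) u := by
  rw [reInner_comm, reInner_mulVec, reInner_comm]

lemma reInner_diagonal_mulVec [DecidableEq n] (d : n → ℝ) (w : n → ℂ) :
    reInner w (diagonal (RCLike.ofReal ∘ d) *ᵥ w) = ∑ i, d i * ‖w i‖ ^ 2 := by
  simp only [reInner, mulVec_diagonal, Complex.re_sum]
  refine Finset.sum_congr rfl fun i _ => ?_
  rw [Function.comp_apply, mul_left_comm, Complex.conj_mul', ← Complex.ofReal_pow,
    RCLike.ofReal_eq_complex_ofReal, ← Complex.ofReal_mul, Complex.ofReal_re]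

lemma Matrix.IsHermitian.reInner_mulVec_le [DecidableEq n] {B : Matrix n n ℂ}
    (hB : B.IsHermitian) {c : ℝ} (hc : ∀ i, hB.eigenvalues i ≤ c) (u : n → ℂ) :
    reInner u (B *ᵥ u) ≤ c * l2sq u := by
  have hD := hB.conjStarAlgAut_star_eigenvectorUnitary
  simp only [Unitary.conjStarAlgAut_apply, Unitary.coe_star, star_eq_conjTranspose,
    conjTranspose_conjTranspose] at hD
  set U : Matrix n n ℂ := (hB.eigenvectorUnitary : Matrix n n ℂ)
  set D : Matrix n n ℂ := diagonal (RCLike.ofReal ∘ hB.eigenvalues)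
  have hUU : Uᴴ * U = 1 := mem_unitaryGroup_iff'.mp hB.eigenvectorUnitary.2
  have hUU' : U * Uᴴ = 1 := mem_unitaryGroup_iff.mp hB.eigenvectorUnitary.2
  have hB' : B = U * D * Uᴴ := by
    rw [← hD, ← mul_assoc, ← mul_assoc, hUU', one_mul, mul_assoc, hUU', mul_one]
  have hadj (v z : n → ℂ) : reInner v (U *ᵥ z) = reInner (Uᴴ *ᵥ v) z := by
    rw [reInner_mulVec, conjTranspose_conjTranspose]
  set w := Uᴴ *ᵥ u
  have hw : l2sq u = l2sq w := by
    rw [← reInner_self, ← reInner_self, show u = U *ᵥ w by rw [mulVec_mulVec, hUU', one_mulVec],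
      hadj, mulVec_mulVec, hUU, one_mulVec]
  calc reInner u (B *ᵥ u) = reInner w (D *ᵥ w) := by
        rw [hB', ← mulVec_mulVec, ← mulVec_mulVec, hadj]
    _ = ∑ i, hB.eigenvalues i * ‖w i‖ ^ 2 := reInner_diagonal_mulVec _ _
    _ ≤ ∑ i, c * ‖w i‖ ^ 2 :=
        Finset.sum_le_sum fun i _ => mul_le_mul_of_nonneg_right (hc i) (sq_nonneg _)
    _ = c * l2sq u := by rw [hw, l2sq, Finset.mul_sum]

lemma lmax_nonneg {m n : ℕ} (A : Matrix (Fin m) (Fin n) ℂ) : 0 ≤ lmax A := by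
  rcases isEmpty_or_nonempty (Fin n) with h | ⟨⟨i⟩⟩
  · simp [lmax]
  · exact (eigenvalues_conjTranspose_mul_self_nonneg A i).trans
      (le_ciSup (Set.finite_range _).bddAbove i)

lemma l2sq_mulVec_le_lmax {m n : ℕ} (A : Matrix (Fin m) (Fin n) ℂ) (u : Fin n → ℂ) :
    l2sq (A *ᵥ u) ≤ lmax A * l2sq u := by
  rw [← reInner_self, reInner_mulVec, mulVec_mulVec]
  exact (isHermitian_conjTranspose_mul_self A).reInner_mulVec_le
    (fun i => le_ciSup (Set.finite_range _).bddAbove i) u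

end MatrixBounds

section Shrink

variable {ι : Type*} [Fintype ι]

lemma ofReal_norm_mul_csign (w : ℂ) : (‖w‖ : ℂ) * csign w = w := by
  unfold csign
  split_ifs with hw
  · simp [hw]
  · field_simp [Complex.ofReal_ne_zero.mpr (norm_ne_zero_iff.mpr hw)]

lemma norm_csign_of_ne_zero {w : ℂ} (hw : w ≠ 0) : ‖csign w‖ = 1 := by
  rw [csign, if_neg hw, norm_div, Complex.norm_real, norm_norm, div_self (norm_ne_zero_iff.mpr hw)]

lemma sub_shrink_apply (z : ι → ℂ) (ν : ℝ) (i : ι) :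
    z i - shrink z ν i = ((min ‖z i‖ ν : ℝ) : ℂ) * csign (z i) := by
  conv_lhs => rw [← ofReal_norm_mul_csign (z i)]
  rw [shrink, ← sub_mul, ← Complex.ofReal_sub]
  congr 3
  rcases le_total ‖z i‖ ν with h | h
  · rw [max_eq_right (by linarith), min_eq_left h, sub_zero]
  · rw [max_eq_left (by linarith), min_eq_right h]; ring

lemma norm_sub_shrink_apply_le (z : ι → ℂ) {ν : ℝ} (hν : 0 ≤ ν) (i : ι) :
    ‖z i - shrink z ν i‖ ≤ ν := by
  by_cases hz : z i = 0
  · simp [shrink, csign, hz, hν]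
  rw [sub_shrink_apply, norm_mul, Complex.norm_real, norm_csign_of_ne_zero hz, mul_one,
    Real.norm_of_nonneg (le_min (norm_nonneg _) hν)]
  exact min_le_right _ _

lemma re_conj_sub_shrink_apply_mul (z : ι → ℂ) (ν : ℝ) (i : ι) :
    ((starRingEnd ℂ) (z i - shrink z ν i) * shrink z ν i).re = ν * ‖shrink z ν i‖ := by
  by_cases hz : z i = 0
  · simp [shrink, csign, hz]
  have hs : (starRingEnd ℂ) (csign (z i)) * csign (z i) = 1 := by
    rw [Complex.conj_mul', norm_csign_of_ne_zero hz]; simp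
  have hmin : min ‖z i‖ ν * max (‖z i‖ - ν) 0 = ν * max (‖z i‖ - ν) 0 := by
    rcases le_total ‖z i‖ ν with h | h
    · rw [max_eq_right (by linarith)]; ring
    · rw [min_eq_right h]
  rw [sub_shrink_apply, shrink, map_mul, Complex.conj_ofReal, norm_mul, Complex.norm_real,
    norm_csign_of_ne_zero hz, mul_one, Real.norm_of_nonneg (le_max_right _ _),
    mul_mul_mul_comm, hs, mul_one, ← Complex.ofReal_mul, Complex.ofReal_re, hmin]

lemma shrink_prox (z : ι → ℂ) {ν : ℝ} (hν : 0 ≤ ν) (u : ι → ℂ) :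
    ν * l1 (shrink z ν) + reInner (z - shrink z ν) (u - shrink z ν) ≤ ν * l1 u := by
  simp only [l1, reInner, Finset.mul_sum, Complex.re_sum, ← Finset.sum_add_distrib]
  refine Finset.sum_le_sum fun i _ => ?_
  have hre := re_conj_sub_shrink_apply_mul z ν i
  have hbound : ((starRingEnd ℂ) (z i - shrink z ν i) * u i).re ≤ ν * ‖u i‖ :=
    calc _ ≤ ‖(starRingEnd ℂ) (z i - shrink z ν i) * u i‖ := Complex.re_le_norm _
      _ = ‖z i - shrink z ν i‖ * ‖u i‖ := by rw [norm_mul, Complex.norm_conj]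
      _ ≤ ν * ‖u i‖ :=
        mul_le_mul_of_nonneg_right (norm_sub_shrink_apply_le z hν i) (norm_nonneg _)
  simp only [Pi.sub_apply, mul_sub, Complex.sub_re] at hbound ⊢
  linarith

end Shrink

lemma nonneg_of_forall_mul_add_sq_mul_nonneg {a c : ℝ}
    (h : ∀ t : ℝ, 0 < t → t ≤ 1 → 0 ≤ t * a + t ^ 2 * c) : 0 ≤ a := by
  have hlim : Tendsto (fun t : ℝ => a + t * c) (𝓝[>] 0) (𝓝 a) :=
    ((continuous_const.add (continuous_id.mul continuous_const)).tendsto' 0 a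
      (by simp)).mono_left nhdsWithin_le_nhds
  refine ge_of_tendsto hlim ?_
  filter_upwards [Ioo_mem_nhdsGT one_pos] with t ⟨ht0, ht1⟩
  exact nonneg_of_mul_nonneg_right (by linear_combination h t ht0 ht1.le) ht0

section KKT

variable {m n : Type*} [Fintype m] [Fintype n]

/-- The multiplier `y` also stands for the residual: the optimal `r` of the program is `μ • y`. -/
structure IsKKTPoint (A : Matrix m n ℂ) (b : m → ℂ) (μ : ℝ) (x : n → ℂ) (y : m → ℂ) :
    Prop where
  feasible : A *ᵥ x + μ • y = b
  subgradient : ∀ u, l1 x + reInner (Aᴴ *ᵥ y) (u - x) ≤ l1 u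

lemma isKKTPoint_of_forall_le {A : Matrix m n ℂ} {b : m → ℂ} {μ : ℝ} (hμ : 0 < μ) {x : n → ℂ}
    (hmin : ∀ u, l1 x + (1 / (2 * μ)) * l2sq (b - A *ᵥ x) ≤
      l1 u + (1 / (2 * μ)) * l2sq (b - A *ᵥ u)) :
    IsKKTPoint A b μ x ((1 / μ) • (b - A *ᵥ x)) := by
  set y := (1 / μ) • (b - A *ᵥ x)
  have hres : b - A *ᵥ x = μ • y := by rw [smul_smul, mul_one_div_cancel hμ.ne', one_smul]
  refine ⟨by rw [← hres, add_sub_cancel], fun u => ?_⟩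
  set X := reInner (Aᴴ *ᵥ y) (u - x)
  suffices 0 ≤ l1 u - l1 x - X by linarith
  refine nonneg_of_forall_mul_add_sq_mul_nonneg
    (c := l2sq (A *ᵥ (u - x)) / (2 * μ)) fun t ht0 ht1 => ?_
  have hpt : (1 - t) • x + t • u = x + t • (u - x) := by module
  have hexpand : (1 / (2 * μ)) * l2sq (b - A *ᵥ (x + t • (u - x))) =
      (1 / (2 * μ)) * l2sq (μ • y) - t * X + t ^ 2 * (l2sq (A *ᵥ (u - x)) / (2 * μ)) := by
    rw [mulVec_add, mulVec_smul, ← sub_sub, hres, l2sq_sub, l2sq_smul t, reInner_smul_left,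
      reInner_smul_right, reInner_mulVec_right]
    field_simp
    ring
  have hconv := l1_smul_add_smul_le x u ht0.le ht1
  have hmin' := hmin (x + t • (u - x))
  rw [hexpand, hres, ← hpt] at hmin'
  linarith

lemma exists_isKKTPoint (A : Matrix m n ℂ) (b : m → ℂ) {μ : ℝ} (hμ : 0 < μ) :
    ∃ x y, IsKKTPoint A b μ x y := by
  have hcont : Continuous fun v => l1 v + (1 / (2 * μ)) * l2sq (b - A *ᵥ v) :=
    continuous_l1.add (continuous_const.mul (continuous_l2sq.comp (by fun_prop)))
  have hcoercive : Tendsto (fun v => l1 v + (1 / (2 * μ)) * l2sq (b - A *ᵥ v))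
      (cocompact (n → ℂ)) atTop := by
    refine tendsto_atTop_mono (fun v => ?_) tendsto_norm_cocompact_atTop
    have := mul_nonneg (one_div_nonneg.mpr (by positivity : (0 : ℝ) ≤ 2 * μ))
      (l2sq_nonneg (b - A *ᵥ v))
    linarith [norm_le_l1 v]
  obtain ⟨x, hx⟩ := hcont.exists_forall_le hcoercive
  exact ⟨x, _, isKKTPoint_of_forall_le hμ hx⟩

lemma IsKKTPoint.le_objective {A : Matrix m n ℂ} {b : m → ℂ} {μ : ℝ} {x : n → ℂ} {y : m → ℂ}
    (h : IsKKTPoint A b μ x y) (hμ : 0 < μ) {x' : n → ℂ} {r' : m → ℂ}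
    (h' : A *ᵥ x' + r' = b) :
    l1 x + (1 / (2 * μ)) * l2sq (μ • y) ≤ l1 x' + (1 / (2 * μ)) * l2sq r' := by
  have hA : A *ᵥ (x' - x) = μ • y - r' := by
    rw [mulVec_sub, eq_sub_of_add_eq h', eq_sub_of_add_eq h.feasible]; abel
  have hsub := h.subgradient x'
  rw [reInner_comm, ← reInner_mulVec, hA] at hsub
  have hr := l2sq_sub (μ • y) (μ • y - r')
  rw [sub_sub_cancel, reInner_smul_left] at hr
  have hexpand : (1 / (2 * μ)) * l2sq r' = (1 / (2 * μ)) * l2sq (μ • y)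
      - reInner (μ • y - r') y + (1 / (2 * μ)) * l2sq (μ • y - r') := by
    rw [hr, reInner_comm]; field_simp
  have := mul_nonneg (one_div_nonneg.mpr (by positivity : (0 : ℝ) ≤ 2 * μ))
    (l2sq_nonneg (μ • y - r'))
  linarith

end KKT

section Step

variable {m n : Type*} [Fintype m] [Fintype n]

noncomputable def padmEnergy (β τ γ : ℝ) (xs : n → ℂ) (ys : m → ℂ) (x : n → ℂ) (y : m → ℂ) : ℝ :=
  (β / τ) * l2sq (x - xs) + (1 / (γ * β)) * l2sq (y - ys)

structure PADMStep (A : Matrix m n ℂ) (b : m → ℂ) (μ β τ γ : ℝ) (x : n → ℂ) (y : m → ℂ)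
    (x' : n → ℂ) (r' y' : m → ℂ) : Prop where
  r_eq : r' = (μ * β / (1 + μ * β)) • ((1 / β) • y - (A *ᵥ x - b))
  x_eq : x' = shrink (x - τ • (Aᴴ *ᵥ (A *ᵥ x + r' - b - (1 / β) • y))) (τ / β)
  y_eq : y' = y - (γ * β) • (A *ᵥ x' + r' - b)

variable {A : Matrix m n ℂ} {b : m → ℂ} {μ β τ γ : ℝ} {x x' : n → ℂ} {y r' y' : m → ℂ}

lemma PADMStep.smul_y_eq (h : PADMStep A b μ β τ γ x y x' r' y') (hμ : 0 < μ) (hβ : 0 < β) :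
    μ • y = r' + (μ * β) • (A *ᵥ x + r' - b) := by
  have hβ' : (β : ℂ) ≠ 0 := by exact_mod_cast hβ.ne'
  have hμβ : (1 + μ * β : ℂ) ≠ 0 := by exact_mod_cast (by positivity : (1 + μ * β) ≠ 0)
  rw [h.r_eq]
  ext i
  simp only [Pi.smul_apply, Pi.add_apply, Pi.sub_apply, Complex.real_smul, Complex.ofReal_div,
    Complex.ofReal_mul, Complex.ofReal_add, Complex.ofReal_one]
  field_simp
  ring

lemma PADMStep.gradient_eq (h : PADMStep A b μ β τ γ x y x' r' y') (hμ : 0 < μ) (hβ : 0 < β) :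
    A *ᵥ x + r' - b - (1 / β) • y = -(1 / (μ * β)) • r' := by
  have hμ' : (μ : ℂ) ≠ 0 := by exact_mod_cast hμ.ne'
  have hβ' : (β : ℂ) ≠ 0 := by exact_mod_cast hβ.ne'
  have hy := congrFun (h.smul_y_eq hμ hβ)
  ext i
  specialize hy i
  simp only [Pi.smul_apply, Pi.add_apply, Pi.sub_apply, Complex.real_smul, Complex.ofReal_neg,
    Complex.ofReal_div, Complex.ofReal_mul, Complex.ofReal_one] at hy ⊢
  field_simp
  linear_combination -hy

lemma PADMStep.prox_le (h : PADMStep A b μ β τ γ x y x' r' y') (hμ : 0 < μ) (hβ : 0 < β)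
    (hτ : 0 < τ) (u : n → ℂ) :
    (τ / β) * l1 x' + reInner ((x - x') + (τ / (μ * β)) • (Aᴴ *ᵥ r')) (u - x') ≤
      (τ / β) * l1 u := by
  have hprox := shrink_prox (x - τ • (Aᴴ *ᵥ (A *ᵥ x + r' - b - (1 / β) • y)))
    (by positivity : 0 ≤ τ / β) u
  rwa [← h.x_eq, h.gradient_eq hμ hβ, mulVec_smul, smul_smul, mul_neg, neg_smul, sub_neg_eq_add,
    add_sub_right_comm, mul_one_div] at hprox

lemma PADMStep.x_descent (h : PADMStep A b μ β τ γ x y x' r' y') (hμ : 0 < μ) (hβ : 0 < β)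
    (hτ : 0 < τ) {xs : n → ℂ} {ys : m → ℂ} (hK : IsKKTPoint A b μ xs ys) :
    (β / τ) * (l2sq (x' - xs) + l2sq (x - x') - l2sq (x - xs)) ≤
      (2 / μ) * reInner (r' - μ • ys) (A *ᵥ (x' - xs)) := by
  set P := reInner (x - x') (x' - xs)
  set Q := reInner r' (A *ᵥ (x' - xs))
  set R := reInner ys (A *ᵥ (x' - xs))
  have hprox := h.prox_le hμ hβ hτ xs
  rw [← neg_sub x' xs, reInner_add_left, reInner_smul_left, ← reInner_mulVec_right, mulVec_neg,
    reInner_neg_right, reInner_neg_right] at hprox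
  have hsub := hK.subgradient x'
  rw [← reInner_mulVec_right] at hsub
  have hpol : l2sq (x - xs) = l2sq (x - x') + 2 * P + l2sq (x' - xs) := by
    rw [← l2sq_add, sub_add_sub_cancel]
  -- prox inequality at `xs` plus `τ / β` times the subgradient inequality at `x'`
  have hsub' := mul_le_mul_of_nonneg_left hsub (by positivity : 0 ≤ τ / β)
  have hcomb : -P - (τ / (μ * β)) * Q + (τ / β) * R ≤ 0 := by linarith
  have hscale := mul_nonpos_of_nonneg_of_nonpos (by positivity : 0 ≤ 2 * β / τ) hcomb
  rw [hpol, reInner_sub_left, reInner_smul_left]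
  have hid : (2 * β / τ) * (-P - (τ / (μ * β)) * Q + (τ / β) * R) =
      (β / τ) * (-2 * P) - (2 / μ) * (Q - μ * R) := by
    field_simp
    ring
  linarith

lemma PADMStep.y_energy_eq (h : PADMStep A b μ β τ γ x y x' r' y') (hμ : 0 < μ) (hβ : 0 < β)
    (hγ : 0 < γ) {xs : n → ℂ} {ys : m → ℂ} (hK : IsKKTPoint A b μ xs ys) :
    (1 / (γ * β)) * l2sq (y' - ys) = (1 / (γ * β)) * l2sq (y - ys)
      - (2 / μ) * reInner (r' - μ • ys) (A *ᵥ (x' - xs)) - (2 / μ) * l2sq (r' - μ • ys)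
      - 2 * β * reInner (A *ᵥ (x - x')) (A *ᵥ x' + r' - b)
      - (2 - γ) * β * l2sq (A *ᵥ x' + r' - b) := by
  have hs : A *ᵥ x' + r' - b = A *ᵥ (x' - xs) + (r' - μ • ys) := by
    rw [mulVec_sub, ← hK.feasible]; abel
  have hy : μ • (y - ys) = (r' - μ • ys) + (μ * β) • (A *ᵥ (x - x') + (A *ᵥ x' + r' - b)) := by
    rw [smul_sub, h.smul_y_eq hμ hβ, mulVec_sub]; module
  set s := A *ᵥ x' + r' - b
  have hI : μ * reInner (y - ys) s = reInner (r' - μ • ys) (A *ᵥ (x' - xs))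
      + l2sq (r' - μ • ys) + μ * β * reInner (A *ᵥ (x - x')) s + μ * β * l2sq s := by
    rw [← reInner_smul_left, hy, reInner_add_left, reInner_smul_left, reInner_add_left,
      reInner_self]
    nth_rewrite 1 [hs]
    rw [reInner_add_right, reInner_self]
    ring
  rw [h.y_eq, show y - (γ * β) • s - ys = (y - ys) - (γ * β) • s by abel, l2sq_sub, l2sq_smul,
    reInner_smul_right]
  linear_combination (norm := skip) (-2 / μ) * hI
  field_simp
  ring

lemma PADMStep.energy_descent (h : PADMStep A b μ β τ γ x y x' r' y') (hμ : 0 < μ)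
    (hβ : 0 < β) (hτ : 0 < τ) (hγ : 0 < γ) {xs : n → ℂ} {ys : m → ℂ}
    (hK : IsKKTPoint A b μ xs ys) {L : ℝ} (hL : ∀ u, l2sq (A *ᵥ u) ≤ L * l2sq u) {ρ : ℝ}
    (hρ : 0 < ρ) :
    padmEnergy β τ γ xs ys x' y' + β * (1 / τ - ρ * L) * l2sq (x - x')
      + β * (2 - γ - 1 / ρ) * l2sq (A *ᵥ x' + r' - b) + (2 / μ) * l2sq (r' - μ • ys) ≤
      padmEnergy β τ γ xs ys x y := by
  have hx := h.x_descent hμ hβ hτ hK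
  have hy := h.y_energy_eq hμ hβ hγ hK
  have hyoung := mul_le_mul_of_nonneg_left
    (neg_two_mul_reInner_le hρ (A *ᵥ (x - x')) (A *ᵥ x' + r' - b)) hβ.le
  have hAe := mul_le_mul_of_nonneg_left (hL (x - x')) (by positivity : 0 ≤ β * ρ)
  unfold padmEnergy
  linear_combination hx + hy + hyoung + hAe

end Step

lemma tendsto_zero_of_forall_succ_add_le {E f : ℕ → ℝ} (hE : ∀ k, 0 ≤ E k) (hf : ∀ k, 0 ≤ f k)
    (h : ∀ k, E (k + 1) + f k ≤ E k) : Tendsto f atTop (𝓝 0) := by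
  have hsum : ∀ N, ∑ k ∈ Finset.range N, f k + E N ≤ E 0 := by
    intro N
    induction N with
    | zero => simp
    | succ N ih => rw [Finset.sum_range_succ]; linarith [h N]
  refine (summable_of_sum_range_le (c := E 0) hf fun N => ?_).tendsto_atTop_zero
  linarith [hsum N, hE N]

lemma tendsto_of_mul_l2sq_sub_le {ι : Type*} [Fintype ι] {f : ℕ → ℝ}
    (hf : Tendsto f atTop (𝓝 0)) {c : ℝ} (hc : 0 < c) {v : ℕ → ι → ℂ} {a : ι → ℂ}
    (h : ∀ k, c * l2sq (v k - a) ≤ f k) : Tendsto v atTop (𝓝 a) := by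
  refine tendsto_nhds_of_l2sq_sub_tendsto_zero (squeeze_zero (fun k => l2sq_nonneg _)
    (fun k => ?_) (by simpa using hf.div_const c))
  rw [le_div_iff₀ hc, mul_comm]
  exact h k

lemma exists_descent_weights {τ γ L : ℝ} (hτ : 0 < τ) (hL : 0 ≤ L) (hτγ : τ * L + γ < 2) :
    ∃ ρ > 0, 0 < 1 / τ - ρ * L ∧ 0 < 2 - γ - 1 / ρ := by
  have hpos : 0 < 2 - γ + τ * L := by nlinarith
  refine ⟨2 / (2 - γ + τ * L), by positivity, ?_, ?_⟩
  · rw [sub_pos, div_mul_eq_mul_div, div_lt_div_iff₀ hpos hτ]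
    nlinarith
  · rw [one_div_div]
    linarith

section Iteration

variable {m n : Type*} [Fintype m] [Fintype n] {A : Matrix m n ℂ} {b : m → ℂ}
  {μ β τ γ L : ℝ} {x : ℕ → n → ℂ} {r y : ℕ → m → ℂ}

lemma padmEnergy_nonneg (hβ : 0 < β) (hτ : 0 < τ) (hγ : 0 < γ) (xs : n → ℂ) (ys : m → ℂ)
    (x : n → ℂ) (y : m → ℂ) : 0 ≤ padmEnergy β τ γ xs ys x y :=
  add_nonneg (mul_nonneg (by positivity) (l2sq_nonneg _))
    (mul_nonneg (by positivity) (l2sq_nonneg _))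

lemma exists_padmEnergy_descent
    (hstep : ∀ k, PADMStep A b μ β τ γ (x k) (y k) (x (k + 1)) (r (k + 1)) (y (k + 1)))
    (hμ : 0 < μ) (hβ : 0 < β) (hτ : 0 < τ) (hγ : 0 < γ)
    (hL : ∀ u, l2sq (A *ᵥ u) ≤ L * l2sq u) (hL0 : 0 ≤ L) (hτγ : τ * L + γ < 2)
    {xs : n → ℂ} {ys : m → ℂ} (hK : IsKKTPoint A b μ xs ys) :
    ∃ c > 0, ∀ k, padmEnergy β τ γ xs ys (x (k + 1)) (y (k + 1))
      + c * (l2sq (x k - x (k + 1)) + l2sq (A *ᵥ x (k + 1) + r (k + 1) - b)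
        + l2sq (r (k + 1) - μ • ys)) ≤ padmEnergy β τ γ xs ys (x k) (y k) := by
  obtain ⟨ρ, hρ, h1, h2⟩ := exists_descent_weights hτ hL0 hτγ
  set c := min (β * (1 / τ - ρ * L)) (min (β * (2 - γ - 1 / ρ)) (2 / μ))
  refine ⟨c, lt_min (by positivity) (lt_min (by positivity) (by positivity)), fun k => ?_⟩
  have hdesc := (hstep k).energy_descent hμ hβ hτ hγ hK hL hρ
  have hc1 : c * l2sq (x k - x (k + 1)) ≤ β * (1 / τ - ρ * L) * l2sq (x k - x (k + 1)) :=
    mul_le_mul_of_nonneg_right (min_le_left _ _) (l2sq_nonneg _)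
  have hc2 : c * l2sq (A *ᵥ x (k + 1) + r (k + 1) - b) ≤
      β * (2 - γ - 1 / ρ) * l2sq (A *ᵥ x (k + 1) + r (k + 1) - b) :=
    mul_le_mul_of_nonneg_right ((min_le_right _ _).trans (min_le_left _ _)) (l2sq_nonneg _)
  have hc3 : c * l2sq (r (k + 1) - μ • ys) ≤ (2 / μ) * l2sq (r (k + 1) - μ • ys) :=
    mul_le_mul_of_nonneg_right ((min_le_right _ _).trans (min_le_right _ _)) (l2sq_nonneg _)
  linarith

lemma padmEnergy_antitone
    (hstep : ∀ k, PADMStep A b μ β τ γ (x k) (y k) (x (k + 1)) (r (k + 1)) (y (k + 1)))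
    (hμ : 0 < μ) (hβ : 0 < β) (hτ : 0 < τ) (hγ : 0 < γ)
    (hL : ∀ u, l2sq (A *ᵥ u) ≤ L * l2sq u) (hL0 : 0 ≤ L) (hτγ : τ * L + γ < 2)
    {xs : n → ℂ} {ys : m → ℂ} (hK : IsKKTPoint A b μ xs ys) :
    Antitone fun k => padmEnergy β τ γ xs ys (x k) (y k) := by
  obtain ⟨c, hc, hdesc⟩ := exists_padmEnergy_descent hstep hμ hβ hτ hγ hL hL0 hτγ hK
  refine antitone_nat_of_succ_le fun k => ?_
  have := mul_nonneg hc.le (add_nonneg (add_nonneg (l2sq_nonneg (x k - x (k + 1)))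
    (l2sq_nonneg (A *ᵥ x (k + 1) + r (k + 1) - b))) (l2sq_nonneg (r (k + 1) - μ • ys)))
  linarith [hdesc k]

lemma padm_residuals_tendsto
    (hstep : ∀ k, PADMStep A b μ β τ γ (x k) (y k) (x (k + 1)) (r (k + 1)) (y (k + 1)))
    (hμ : 0 < μ) (hβ : 0 < β) (hτ : 0 < τ) (hγ : 0 < γ)
    (hL : ∀ u, l2sq (A *ᵥ u) ≤ L * l2sq u) (hL0 : 0 ≤ L) (hτγ : τ * L + γ < 2)
    {xs : n → ℂ} {ys : m → ℂ} (hK : IsKKTPoint A b μ xs ys) :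
    Tendsto (fun k => x k - x (k + 1)) atTop (𝓝 0) ∧
      Tendsto (fun k => A *ᵥ x (k + 1) + r (k + 1) - b) atTop (𝓝 0) ∧
      Tendsto (fun k => r (k + 1)) atTop (𝓝 (μ • ys)) := by
  obtain ⟨c, hc, hdesc⟩ := exists_padmEnergy_descent hstep hμ hβ hτ hγ hL hL0 hτγ hK
  have hsum := tendsto_zero_of_forall_succ_add_le
    (fun k => padmEnergy_nonneg hβ hτ hγ xs ys (x k) (y k))
    (fun k => mul_nonneg hc.le (add_nonneg (add_nonneg (l2sq_nonneg _) (l2sq_nonneg _))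
      (l2sq_nonneg _))) hdesc
  have h1 := fun k => l2sq_nonneg (x k - x (k + 1))
  have h2 := fun k => l2sq_nonneg (A *ᵥ x (k + 1) + r (k + 1) - b)
  have h3 := fun k => l2sq_nonneg (r (k + 1) - μ • ys)
  refine ⟨tendsto_of_mul_l2sq_sub_le hsum hc fun k => ?_,
    tendsto_of_mul_l2sq_sub_le hsum hc fun k => ?_, tendsto_of_mul_l2sq_sub_le hsum hc fun k => ?_⟩
  · rw [sub_zero]; exact mul_le_mul_of_nonneg_left (by linarith [h2 k, h3 k]) hc.le
  · rw [sub_zero]; exact mul_le_mul_of_nonneg_left (by linarith [h1 k, h3 k]) hc.le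
  · exact mul_le_mul_of_nonneg_left (by linarith [h1 k, h2 k]) hc.le

lemma padm_exists_tendsto_subseq
    (hstep : ∀ k, PADMStep A b μ β τ γ (x k) (y k) (x (k + 1)) (r (k + 1)) (y (k + 1)))
    (hμ : 0 < μ) (hβ : 0 < β) (hτ : 0 < τ) (hγ : 0 < γ)
    (hL : ∀ u, l2sq (A *ᵥ u) ≤ L * l2sq u) (hL0 : 0 ≤ L) (hτγ : τ * L + γ < 2)
    {xs : n → ℂ} {ys : m → ℂ} (hK : IsKKTPoint A b μ xs ys) :
    ∃ xt yt, ∃ φ : ℕ → ℕ, StrictMono φ ∧ Tendsto (x ∘ φ) atTop (𝓝 xt) ∧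
      Tendsto (y ∘ φ) atTop (𝓝 yt) := by
  set C := padmEnergy β τ γ xs ys (x 0) (y 0)
  have hC k : padmEnergy β τ γ xs ys (x k) (y k) ≤ C :=
    padmEnergy_antitone hstep hμ hβ hτ hγ hL hL0 hτγ hK (Nat.zero_le k)
  have hmem k : (x k, y k) ∈
      Metric.closedBall xs √(τ / β * C) ×ˢ Metric.closedBall ys √(γ * β * C) := by
    have hx := mul_nonneg (by positivity : 0 ≤ β / τ) (l2sq_nonneg (x k - xs))
    have hy := mul_nonneg (by positivity : 0 ≤ 1 / (γ * β)) (l2sq_nonneg (y k - ys))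
    have hE := hC k
    unfold padmEnergy at hE
    refine ⟨(dist_eq_norm _ _).trans_le ((norm_le_sqrt_l2sq _).trans (Real.sqrt_le_sqrt ?_)),
      (dist_eq_norm _ _).trans_le ((norm_le_sqrt_l2sq _).trans (Real.sqrt_le_sqrt ?_))⟩
    · calc l2sq (x k - xs) = τ / β * (β / τ * l2sq (x k - xs)) := by field_simp
        _ ≤ τ / β * C := by gcongr; linarith
    · calc l2sq (y k - ys) = γ * β * (1 / (γ * β) * l2sq (y k - ys)) := by field_simp
        _ ≤ γ * β * C := by gcongr; linarith
  obtain ⟨p, -, φ, hφ, hlim⟩ :=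
    ((isCompact_closedBall _ _).prod (isCompact_closedBall _ _)).tendsto_subseq hmem
  exact ⟨p.1, p.2, φ, hφ, hlim.fst_nhds, hlim.snd_nhds⟩

lemma isKKTPoint_of_tendsto_subseq
    (hstep : ∀ k, PADMStep A b μ β τ γ (x k) (y k) (x (k + 1)) (r (k + 1)) (y (k + 1)))
    (hμ : 0 < μ) (hβ : 0 < β) (hτ : 0 < τ) {φ : ℕ → ℕ} (hφ : StrictMono φ)
    {xt : n → ℂ} {yt rt : m → ℂ} (hxφ : Tendsto (x ∘ φ) atTop (𝓝 xt))
    (hyφ : Tendsto (y ∘ φ) atTop (𝓝 yt)) (he : Tendsto (fun k => x k - x (k + 1)) atTop (𝓝 0))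
    (hs : Tendsto (fun k => A *ᵥ x (k + 1) + r (k + 1) - b) atTop (𝓝 0))
    (hr : Tendsto (fun k => r (k + 1)) atTop (𝓝 rt)) :
    rt = μ • yt ∧ IsKKTPoint A b μ xt yt := by
  have hφ' := hφ.tendsto_atTop
  have heφ : Tendsto (fun j => x (φ j) - x (φ j + 1)) atTop (𝓝 0) := he.comp hφ'
  have hx1 : Tendsto (fun j => x (φ j + 1)) atTop (𝓝 xt) := by
    simpa using hxφ.sub heφ
  have hr1 : Tendsto (fun j => r (φ j + 1)) atTop (𝓝 rt) := hr.comp hφ'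
  have hA : Continuous fun v : n → ℂ => A *ᵥ v := by fun_prop
  have hfeas : A *ᵥ xt + rt = b := by
    have hlim := (((hA.tendsto xt).comp hx1).add hr1).sub_const b
    exact sub_eq_zero.mp (tendsto_nhds_unique hlim (hs.comp hφ'))
  have hrt : rt = μ • yt := by
    have hlim := hr1.add ((((hA.tendsto xt).comp hxφ).add hr1).sub_const b |>.const_smul (μ * β))
    rw [hfeas, sub_self, smul_zero, add_zero] at hlim
    refine tendsto_nhds_unique hlim ?_
    simpa only [Function.comp_def, (hstep _).smul_y_eq hμ hβ] using hyφ.const_smul μ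
  refine ⟨hrt, by rw [← hrt, hfeas], fun u => ?_⟩
  have hlim := (((continuous_l1.tendsto xt).comp hx1).const_mul (τ / β)).add
    ((heφ.add ((((by fun_prop : Continuous fun v : m → ℂ => Aᴴ *ᵥ v).tendsto rt).comp
      hr1).const_smul (τ / (μ * β)))).reInner (tendsto_const_nhds (x := u) |>.sub hx1))
  have hle := le_of_tendsto' hlim fun j => (hstep (φ j)).prox_le hμ hβ hτ u
  have hcoef : τ / (μ * β) * μ = τ / β := by field_simp
  rw [zero_add, hrt, mulVec_smul, smul_smul, reInner_smul_left, hcoef, ← mul_add] at hle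
  exact le_of_mul_le_mul_left hle (by positivity)

lemma tendsto_of_isKKTPoint_of_tendsto_subseq
    (hstep : ∀ k, PADMStep A b μ β τ γ (x k) (y k) (x (k + 1)) (r (k + 1)) (y (k + 1)))
    (hμ : 0 < μ) (hβ : 0 < β) (hτ : 0 < τ) (hγ : 0 < γ)
    (hL : ∀ u, l2sq (A *ᵥ u) ≤ L * l2sq u) (hL0 : 0 ≤ L) (hτγ : τ * L + γ < 2)
    {xt : n → ℂ} {yt : m → ℂ} (hK : IsKKTPoint A b μ xt yt) {φ : ℕ → ℕ} (hφ : StrictMono φ)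
    (hxφ : Tendsto (x ∘ φ) atTop (𝓝 xt)) (hyφ : Tendsto (y ∘ φ) atTop (𝓝 yt)) :
    Tendsto x atTop (𝓝 xt) ∧ Tendsto y atTop (𝓝 yt) := by
  have hcont : Continuous fun p : (n → ℂ) × (m → ℂ) => padmEnergy β τ γ xt yt p.1 p.2 :=
    (continuous_const.mul (continuous_l2sq.comp (continuous_fst.sub continuous_const))).add
      (continuous_const.mul (continuous_l2sq.comp (continuous_snd.sub continuous_const)))
  have h0 : padmEnergy β τ γ xt yt xt yt = 0 := by simp [padmEnergy, l2sq]
  have hEφ := (hcont.tendsto (xt, yt)).comp (hxφ.prodMk_nhds hyφ)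
  rw [h0] at hEφ
  have hE := (tendsto_iff_tendsto_subseq_of_antitone
    (padmEnergy_antitone hstep hμ hβ hτ hγ hL hL0 hτγ hK) hφ.tendsto_atTop).mpr hEφ
  have hx k := mul_nonneg (by positivity : 0 ≤ β / τ) (l2sq_nonneg (x k - xt))
  have hy k := mul_nonneg (by positivity : 0 ≤ 1 / (γ * β)) (l2sq_nonneg (y k - yt))
  exact ⟨tendsto_of_mul_l2sq_sub_le hE (by positivity) fun k => le_add_of_nonneg_right (hy k),
    tendsto_of_mul_l2sq_sub_le hE (by positivity) fun k => le_add_of_nonneg_left (hx k)⟩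

end Iteration

/-- Theorem 2.1 (convergence of the primal ADM for QP_mu). -/
theorem padm_qp_convergence {m n : ℕ} (A : Matrix (Fin m) (Fin n) ℂ) (b : Fin m → ℂ)
    (μ β τ γ : ℝ) (hμ : 0 < μ) (hβ : 0 < β) (hτ : 0 < τ) (hγ : 0 < γ)
    (hτγ : τ * lmax A + γ < 2)
    (x : ℕ → Fin n → ℂ) (r : ℕ → Fin m → ℂ) (y : ℕ → Fin m → ℂ)
    (hr : ∀ k, r (k+1) = (μ * β / (1 + μ * β)) • ((1/β) • y k - (A.mulVec (x k) - b)))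
    (hx : ∀ k, x (k+1) =
      shrink (x k - τ • (Aᴴ.mulVec (A.mulVec (x k) + r (k+1) - b - (1/β) • y k))) (τ/β))
    (hy : ∀ k, y (k+1) = y k - (γ * β) • (A.mulVec (x (k+1)) + r (k+1) - b)) :
    ∃ (rt : Fin m → ℂ) (xt : Fin n → ℂ) (yt : Fin m → ℂ),
      Tendsto r atTop (𝓝 rt) ∧ Tendsto x atTop (𝓝 xt) ∧ Tendsto y atTop (𝓝 yt) ∧
      A.mulVec xt + rt = b ∧
      ∀ (x' : Fin n → ℂ) (r' : Fin m → ℂ), A.mulVec x' + r' = b →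
        l1 xt + (1/(2*μ)) * l2sq rt ≤ l1 x' + (1/(2*μ)) * l2sq r' := by
  have hstep k : PADMStep A b μ β τ γ (x k) (y k) (x (k + 1)) (r (k + 1)) (y (k + 1)) :=
    ⟨hr k, hx k, hy k⟩
  have hL := l2sq_mulVec_le_lmax A
  have hL0 := lmax_nonneg A
  obtain ⟨xs, ys, hK⟩ := exists_isKKTPoint A b hμ
  obtain ⟨he, hs, hr1⟩ := padm_residuals_tendsto hstep hμ hβ hτ hγ hL hL0 hτγ hK
  obtain ⟨xt, yt, φ, hφ, hxφ, hyφ⟩ :=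
    padm_exists_tendsto_subseq hstep hμ hβ hτ hγ hL hL0 hτγ hK
  obtain ⟨hrt, hKt⟩ := isKKTPoint_of_tendsto_subseq hstep hμ hβ hτ hφ hxφ hyφ he hs hr1
  obtain ⟨hxt, hyt⟩ :=
    tendsto_of_isKKTPoint_of_tendsto_subseq hstep hμ hβ hτ hγ hL hL0 hτγ hKt hφ hxφ hyφ
  rw [hrt] at hr1
  exact ⟨μ • yt, xt, yt, (tendsto_add_atTop_iff_nat 1).mp hr1, hxt, hyt, hKt.feasible,
    fun x' r' h' => hKt.le_objective hμ h'⟩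
end

section
/- Let z ∈ ℂ^n and ν > 0. Then the function x ↦ ‖x‖₁ + (1/(2ν))‖x − z‖₂² over x ∈ ℂ^n has the unique minimizer x = Shrink(z, ν), i.e., the vector with components max(|zᵢ| − ν, 0)·sign(zᵢ). -/
open Filter Topology Matrix Finset

/-!
With `g = (z - s) / ν`, the optimality condition for `s` is that `g` is a subgradient of the norm at
`s`: `‖g‖ ≤ 1` and `⟪g, s⟫ = ‖s‖`. Expanding `‖w - z‖² = ‖(w - s) - ν g‖²` then shows that the
objective exceeds its value at `s` by at least `‖w - s‖² / (2ν)`, which is positive for `w ≠ s`.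
In any real inner product space the soft threshold `s = max (‖z‖ - ν) 0 • z / ‖z‖` has this
property; `shrink` applies it to each coordinate in `ℂ`, and the coordinate inequalities add up.
-/

open scoped RealInnerProductSpace

section SoftThreshold

variable {E : Type*} [NormedAddCommGroup E] [InnerProductSpace ℝ E]

def IsNormSubgradient (g s : E) : Prop := ‖g‖ ≤ 1 ∧ ⟪g, s⟫ = ‖s‖

theorem IsNormSubgradient.norm_add_inner_sub_le {g s : E} (h : IsNormSubgradient g s) (w : E) :
    ‖s‖ + ⟪g, w - s⟫ ≤ ‖w‖ := by
  have hgw : ⟪g, w⟫ ≤ ‖w‖ :=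
    (real_inner_le_norm g w).trans (mul_le_of_le_one_left (norm_nonneg w) h.1)
  rw [inner_sub_right, h.2]
  linarith

theorem IsNormSubgradient.norm_add_sq_norm_sub_le {ν : ℝ} (hν : 0 < ν) {s z : E}
    (h : IsNormSubgradient (ν⁻¹ • (z - s)) s) (w : E) :
    ‖s‖ + (1 / (2 * ν)) * ‖s - z‖ ^ 2 + (1 / (2 * ν)) * ‖w - s‖ ^ 2 ≤
      ‖w‖ + (1 / (2 * ν)) * ‖w - z‖ ^ 2 := by
  have hsub := h.norm_add_inner_sub_le w
  have hexpand : ‖w - z‖ ^ 2 = ‖w - s‖ ^ 2 - 2 * ⟪w - s, z - s⟫ + ‖s - z‖ ^ 2 := by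
    rw [show w - z = (w - s) - (z - s) by abel, norm_sub_sq_real, norm_sub_rev z s]
  have hinner : ⟪w - s, z - s⟫ ≤ ν * (‖w‖ - ‖s‖) := by
    rw [real_inner_smul_left, real_inner_comm] at hsub
    exact (inv_mul_le_iff₀ hν).mp (by linarith)
  rw [hexpand]
  field_simp
  linarith

noncomputable def softThreshold (ν : ℝ) (z : E) : E := (max (‖z‖ - ν) 0 / ‖z‖) • z

theorem isNormSubgradient_softThreshold {ν : ℝ} (hν : 0 < ν) (z : E) :
    IsNormSubgradient (ν⁻¹ • (z - softThreshold ν z)) (softThreshold ν z) := by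
  unfold softThreshold
  rcases le_or_gt ‖z‖ ν with hle | hgt
  · rw [max_eq_right (by linarith), zero_div, zero_smul, sub_zero]
    refine ⟨?_, by simp⟩
    rw [norm_smul, Real.norm_of_nonneg (inv_nonneg.mpr hν.le)]
    exact inv_mul_le_one_of_le₀ hle hν.le
  · have hz : ‖z‖ ≠ 0 := by linarith
    rw [max_eq_left (by linarith)]
    have hdiff : ν⁻¹ • (z - ((‖z‖ - ν) / ‖z‖) • z) = ‖z‖⁻¹ • z := by
      rw [show z - ((‖z‖ - ν) / ‖z‖) • z = (1 - (‖z‖ - ν) / ‖z‖) • z by rw [sub_smul, one_smul],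
        smul_smul]
      congr 1
      field_simp
      ring
    rw [hdiff]
    refine ⟨by rw [norm_smul, norm_inv, norm_norm, inv_mul_cancel₀ hz], ?_⟩
    rw [real_inner_smul_left, real_inner_smul_right, real_inner_self_eq_norm_sq, norm_smul,
      Real.norm_of_nonneg (div_nonneg (by linarith) (norm_nonneg z))]
    field_simp

end SoftThreshold

theorem shrink_apply_eq_softThreshold {ι : Type*} [Fintype ι] (z : ι → ℂ) (ν : ℝ) (i : ι) :
    shrink z ν i = softThreshold ν (z i) := by
  by_cases hz : z i = 0
  · simp [shrink, softThreshold, csign, hz]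
  · simp only [shrink, softThreshold, csign, if_neg hz, Complex.real_smul]
    push_cast
    ring

theorem l2sq_pos {ι : Type*} [Fintype ι] {v : ι → ℂ} (hv : v ≠ 0) : 0 < l2sq v := by
  obtain ⟨i, hi⟩ := Function.ne_iff.mp hv
  exact Finset.sum_pos' (fun j _ => by positivity)
    ⟨i, Finset.mem_univ i, pow_pos (norm_pos_iff.mpr hi) 2⟩

theorem l1_add_mul_l2sq_shrink_le {ι : Type*} [Fintype ι] {ν : ℝ} (hν : 0 < ν) (z x : ι → ℂ) :
    l1 (shrink z ν) + (1 / (2 * ν)) * l2sq (shrink z ν - z) +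
        (1 / (2 * ν)) * l2sq (x - shrink z ν) ≤
      l1 x + (1 / (2 * ν)) * l2sq (x - z) := by
  simp only [l1, l2sq, Finset.mul_sum, ← Finset.sum_add_distrib, Pi.sub_apply]
  refine Finset.sum_le_sum fun i _ => ?_
  rw [shrink_apply_eq_softThreshold]
  exact (isNormSubgradient_softThreshold hν (z i)).norm_add_sq_norm_sub_le hν (x i)

/-- One-dimensional (componentwise) shrinkage: Shrink(z,ν) is the unique minimizer of
x ↦ ‖x‖₁ + (1/(2ν))‖x − z‖₂². -/
theorem shrinkage_unique_minimizer {n : ℕ} (z : Fin n → ℂ) (ν : ℝ) (hν : 0 < ν) :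
    let F : (Fin n → ℂ) → ℝ := fun x => l1 x + (1/(2*ν)) * l2sq (x - z)
    ∀ x : Fin n → ℂ, x ≠ shrink z ν → F (shrink z ν) < F x := by
  intro F x hx
  have hgap : 0 < (1 / (2 * ν)) * l2sq (x - shrink z ν) :=
    mul_pos (by positivity) (l2sq_pos (sub_ne_zero.mpr hx))
  exact (lt_add_of_pos_right _ hgap).trans_le (l1_add_mul_l2sq_shrink_le hν z x)
end

section
/- Let A ∈ ℂ^{m×n}, b ∈ ℂ^m, δ > 0, and assume the Slater condition: there exists x₀ ∈ ℂ^n with ‖A x₀ − b‖₂ < δ. Then strong duality holds between the constrained basis pursuit denoising problem and its dual: the minimum over x ∈ ℂ^n with ‖A x − b‖₂ ≤ δ of ‖x‖₁ equals the supremum over y ∈ ℂ^m with ‖A*y‖_∞ ≤ 1 of Re(b*y) − δ‖y‖₂, and the minimum is attained. -/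
open Filter Topology Matrix Finset

/-!
The minimum is attained because `l1` is continuous and coercive, and weak duality is Hölder's
inequality plus Cauchy–Schwarz. For the reverse inequality let `P` be the optimal value. The open
ball of radius `δ` in `ℂᵐ` is disjoint from the convex set `{b - A x : ‖x‖₁ < P}`, and a
separating functional `z ↦ Re ⟪y, z⟫` gives `δ ‖y‖₂ ≤ Re ⟪y, b - A x⟫` whenever `‖x‖₁ < P`;
taking the supremum over `x` this reads `P ‖A* y‖_∞ ≤ Re (b* y) - δ ‖y‖₂`. The Slater point
forces `A* y ≠ 0`, and `y / ‖A* y‖_∞` is then a dual feasible point of value at least `P`.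
-/

open scoped InnerProductSpace

lemma le_of_forall_mem_Ico_le {f : ℝ → ℝ} (hf : Continuous f) {a b u : ℝ} (hab : a < b)
    (h : ∀ t ∈ Set.Ico a b, f t ≤ u) : f b ≤ u := by
  have : closure (Set.Ico a b) ⊆ {t | f t ≤ u} :=
    (isClosed_le hf continuous_const).closure_subset_iff.2 h
  exact this (closure_Ico hab.ne ▸ Set.right_mem_Icc.2 hab.le)

lemma mul_norm_le_of_forall_re_inner_lt {𝕜 E : Type*} [RCLike 𝕜] [NormedAddCommGroup E]
    [InnerProductSpace 𝕜 E] {w : E} {δ u : ℝ} (hδ : 0 < δ)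
    (h : ∀ z ∈ Metric.ball (0 : E) δ, RCLike.re ⟪w, z⟫_𝕜 < u) : δ * ‖w‖ ≤ u := by
  refine le_of_forall_mem_Ico_le (f := (· * ‖w‖)) (by fun_prop) hδ fun t ⟨ht0, htδ⟩ => ?_
  rcases eq_or_ne w 0 with rfl | hw
  · simpa using (h 0 (Metric.mem_ball_self hδ)).le
  have hwpos : 0 < ‖w‖ := norm_pos_iff.2 hw
  have hz : ((t / ‖w‖ : ℝ) : 𝕜) • w ∈ Metric.ball (0 : E) δ := by
    rwa [mem_ball_zero_iff, norm_smul, RCLike.norm_ofReal, abs_of_nonneg (by positivity),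
      div_mul_cancel₀ _ hwpos.ne']
  have := h _ hz
  rw [inner_smul_right, inner_self_eq_norm_sq_to_K, ← RCLike.ofReal_pow, ← RCLike.ofReal_mul,
    RCLike.ofReal_re] at this
  calc t * ‖w‖ = t / ‖w‖ * ‖w‖ ^ 2 := by field_simp
    _ ≤ u := this.le

namespace BPDN

variable {ι : Type*} [Fintype ι]

lemma l2_eq_norm (v : ι → ℂ) : l2 v = ‖WithLp.toLp 2 v‖ := by
  simp [l2, l2sq, EuclideanSpace.norm_eq]

lemma reInner_eq_re_inner (y v : ι → ℂ) :
    reInner y v = RCLike.re ⟪WithLp.toLp 2 y, WithLp.toLp 2 v⟫_ℂ := by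
  simp [reInner, PiLp.inner_apply, mul_comm]

lemma l1_nonneg (v : ι → ℂ) : 0 ≤ l1 v := Finset.sum_nonneg fun _ _ => norm_nonneg _

lemma l2_nonneg (v : ι → ℂ) : 0 ≤ l2 v := Real.sqrt_nonneg _

lemma l2_pos {v : ι → ℂ} (hv : v ≠ 0) : 0 < l2 v := by
  simpa [l2_eq_norm] using hv

lemma l2_real_smul (a : ℝ) (v : ι → ℂ) : l2 (a • v) = |a| * l2 v := by
  simp [l2_eq_norm, WithLp.toLp_smul, norm_smul]

lemma reInner_zero_left (v : ι → ℂ) : reInner 0 v = 0 := by simp [reInner]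

lemma reInner_comm (y v : ι → ℂ) : reInner y v = reInner v y := by
  simp only [reInner_eq_re_inner]; exact inner_re_symm _ _

lemma reInner_sub_right (y u v : ι → ℂ) : reInner y (u - v) = reInner y u - reInner y v := by
  simp [reInner_eq_re_inner, WithLp.toLp_sub]

lemma reInner_real_smul_right (a : ℝ) (y v : ι → ℂ) : reInner y (a • v) = a * reInner y v := by
  simp [reInner_eq_re_inner, WithLp.toLp_smul]

lemma reInner_le_l2_mul_l2 (y v : ι → ℂ) : reInner y v ≤ l2 y * l2 v := by
  simpa [reInner_eq_re_inner, l2_eq_norm] using re_inner_le_norm (𝕜 := ℂ) _ _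

lemma norm_le_linf (v : ι → ℂ) (i : ι) : ‖v i‖ ≤ linf v :=
  le_ciSup (f := fun i => ‖v i‖) (Set.finite_range _).bddAbove i

lemma linf_nonneg (v : ι → ℂ) : 0 ≤ linf v := Real.iSup_nonneg fun _ => norm_nonneg _

lemma reInner_le_l1_mul_linf (v x : ι → ℂ) : reInner v x ≤ l1 x * linf v := by
  rw [reInner, Complex.re_sum, l1, Finset.sum_mul]
  gcongr with i
  calc ((starRingEnd ℂ) (v i) * x i).re ≤ ‖v i‖ * ‖x i‖ := by
        simpa using Complex.re_le_norm ((starRingEnd ℂ) (v i) * x i)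
    _ ≤ ‖x i‖ * linf v := by rw [mul_comm]; gcongr; exact norm_le_linf v i

lemma norm_le_l1 (x : ι → ℂ) : ‖x‖ ≤ l1 x :=
  (pi_norm_le_iff_of_nonneg (l1_nonneg x)).2 fun i =>
    Finset.single_le_sum (f := fun i => ‖x i‖) (fun _ _ => norm_nonneg _) (Finset.mem_univ i)

lemma continuous_l1 : Continuous (l1 (ι := ι)) := by
  unfold l1; fun_prop

lemma continuous_l2 : Continuous (l2 (ι := ι)) := by
  simp only [funext l2_eq_norm]; fun_prop

lemma convexOn_l1 : ConvexOn ℝ Set.univ (l1 (ι := ι)) := by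
  refine ⟨convex_univ, fun x _ y _ a c ha hc _ => ?_⟩
  simp only [l1, smul_eq_mul]
  rw [Finset.mul_sum, Finset.mul_sum, ← Finset.sum_add_distrib]
  gcongr with i
  calc ‖(a • x + c • y) i‖ ≤ ‖a • x i‖ + ‖c • y i‖ := norm_add_le _ _
    _ = a * ‖x i‖ + c * ‖y i‖ := by
      rw [norm_smul, norm_smul, Real.norm_of_nonneg ha, Real.norm_of_nonneg hc]

lemma conj_mul_csign (w : ℂ) : (starRingEnd ℂ) w * csign w = ‖w‖ := by
  unfold csign
  split_ifs with hw
  · simp [hw]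
  · rw [mul_div_assoc', Complex.conj_mul', div_eq_iff (by simpa using hw)]; ring

lemma norm_csign_le (w : ℂ) : ‖csign w‖ ≤ 1 := by
  unfold csign
  split_ifs with hw
  · simp
  · simp [hw]

lemma exists_l1_le_reInner_eq_mul_linf (v : ι → ℂ) {s : ℝ} (hs : 0 ≤ s) :
    ∃ x, l1 x ≤ s ∧ reInner v x = s * linf v := by
  classical
  cases isEmpty_or_nonempty ι
  · exact ⟨0, by simp [l1, hs], by simp [reInner, linf]⟩
  obtain ⟨j, hj⟩ := exists_eq_ciSup_of_finite (f := fun i => ‖v i‖)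
  refine ⟨Pi.single j ((s : ℂ) * csign (v j)), ?_, ?_⟩
  · rw [l1, Finset.sum_eq_single j (fun i _ hi => by simp [hi]) (by simp)]
    simpa [norm_mul, Real.norm_of_nonneg hs] using mul_le_of_le_one_right hs (norm_csign_le _)
  · rw [reInner, Finset.sum_eq_single j (fun i _ hi => by simp [hi]) (by simp), linf, ← hj,
      Pi.single_eq_same, mul_left_comm, conj_mul_csign]
    simp

lemma mul_linf_le_of_forall_l1_lt (v : ι → ℂ) {P K : ℝ} (hP : 0 < P)
    (h : ∀ x, l1 x < P → reInner v x ≤ K) : P * linf v ≤ K :=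
  le_of_forall_mem_Ico_le (f := (· * linf v)) (by fun_prop) hP fun s ⟨hs0, hsP⟩ =>
    let ⟨x, hx, hxv⟩ := exists_l1_le_reInner_eq_mul_linf v hs0
    hxv ▸ h x (hx.trans_lt hsP)

lemma reInner_mulVec {κ : Type*} [Fintype κ] (A : Matrix κ ι ℂ) (y : κ → ℂ) (x : ι → ℂ) :
    reInner y (A *ᵥ x) = reInner (Aᴴ *ᵥ y) x := by
  change (star y ⬝ᵥ A *ᵥ x).re = (star (Aᴴ *ᵥ y) ⬝ᵥ x).re
  rw [Matrix.dotProduct_mulVec, Matrix.star_mulVec, Matrix.conjTranspose_conjTranspose]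

lemma l2_sub_comm (u v : ι → ℂ) : l2 (u - v) = l2 (v - u) := by
  simp only [l2_eq_norm, WithLp.toLp_sub, norm_sub_rev]

lemma linf_real_smul (a : ℝ) (v : ι → ℂ) : linf (a • v) = |a| * linf v := by
  simp only [linf, Pi.smul_apply, norm_smul, Real.norm_eq_abs]
  exact (Real.mul_iSup_of_nonneg (abs_nonneg a) _).symm

lemma exists_isMinOn_l1 {s : Set (ι → ℂ)} (hs : IsClosed s) (hne : s.Nonempty) :
    ∃ x ∈ s, IsMinOn l1 s x := by
  obtain ⟨x₀, hx₀⟩ := hne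
  have hcoercive : Tendsto l1 (cocompact (ι → ℂ)) atTop :=
    tendsto_atTop_mono norm_le_l1 tendsto_norm_cocompact_atTop
  exact continuous_l1.continuousOn.exists_isMinOn' hs hx₀
    ((hcoercive.eventually_ge_atTop (l1 x₀)).filter_mono inf_le_left)

section Duality

variable {κ : Type*} [Fintype κ] (A : Matrix κ ι ℂ) (b : κ → ℂ) (δ : ℝ)

lemma reInner_sub_mul_l2_le (x : ι → ℂ) (y : κ → ℂ) :
    reInner b y - δ * l2 y ≤ l1 x * linf (Aᴴ *ᵥ y) + (l2 (A *ᵥ x - b) - δ) * l2 y := by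
  have hsplit : reInner b y = reInner y (b - A *ᵥ x) + reInner (Aᴴ *ᵥ y) x := by
    rw [reInner_sub_right, reInner_mulVec, reInner_comm]; ring
  have hres := reInner_le_l2_mul_l2 y (b - A *ᵥ x)
  rw [l2_sub_comm] at hres
  linarith [reInner_le_l1_mul_linf (Aᴴ *ᵥ y) x]

lemma weak_duality {x : ι → ℂ} {y : κ → ℂ} (hx : l2 (A *ᵥ x - b) ≤ δ)
    (hy : linf (Aᴴ *ᵥ y) ≤ 1) : reInner b y - δ * l2 y ≤ l1 x := by
  have h1 : l1 x * linf (Aᴴ *ᵥ y) ≤ l1 x :=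
    mul_le_of_le_one_right (l1_nonneg x) hy
  have h2 : (l2 (A *ᵥ x - b) - δ) * l2 y ≤ 0 :=
    mul_nonpos_of_nonpos_of_nonneg (by linarith) (l2_nonneg y)
  linarith [reInner_sub_mul_l2_le A b δ x y]

lemma exists_ne_zero_mul_l2_le_reInner {P : ℝ} (hP : 0 < P) (hδ : 0 < δ)
    (hopt : ∀ x, l2 (A *ᵥ x - b) < δ → P ≤ l1 x) :
    ∃ y ≠ 0, ∀ x, l1 x < P → δ * l2 y ≤ reInner y (b - A *ᵥ x) := by
  let S : Set (EuclideanSpace ℂ κ) := {z | ∃ x, l1 x < P ∧ WithLp.toLp 2 (b - A *ᵥ x) = z}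
  have hS : Convex ℝ S := by
    rintro _ ⟨x₁, hx₁, rfl⟩ _ ⟨x₂, hx₂, rfl⟩ a c ha hc hac
    refine ⟨a • x₁ + c • x₂, ?_, ?_⟩
    · exact (convexOn_l1.2 trivial trivial ha hc hac).trans_lt (convex_Iio P hx₁ hx₂ ha hc hac)
    · rw [← WithLp.toLp_smul, ← WithLp.toLp_smul, ← WithLp.toLp_add, Matrix.mulVec_add,
        Matrix.mulVec_smul, Matrix.mulVec_smul]
      congr 1
      calc b - (a • A *ᵥ x₁ + c • A *ᵥ x₂) = (a + c) • b - (a • A *ᵥ x₁ + c • A *ᵥ x₂) := by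
            rw [hac, one_smul]
        _ = _ := by module
  have hdisj : Disjoint (Metric.ball 0 δ) S := by
    refine Set.disjoint_left.2 fun z hz ⟨x, hx, hxz⟩ => (hopt x ?_).not_gt hx
    rwa [l2_sub_comm, l2_eq_norm, hxz, ← mem_ball_zero_iff]
  obtain ⟨f, u, hball, hsep⟩ :=
    RCLike.geometric_hahn_banach_open (𝕜 := ℂ) (convex_ball 0 δ) Metric.isOpen_ball hS hdisj
  set w := (InnerProductSpace.toDual ℂ _).symm f
  have hf : ∀ z, f z = ⟪w, z⟫_ℂ := fun z => InnerProductSpace.toDual_symm_apply.symm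
  have hsep' : ∀ x, l1 x < P → u ≤ reInner w.ofLp (b - A *ᵥ x) := fun x hx => by
    simpa [reInner_eq_re_inner, hf] using hsep _ ⟨x, hx, rfl⟩
  have hu : 0 < u := by simpa using hball 0 (Metric.mem_ball_self hδ)
  have hnorm : δ * l2 w.ofLp ≤ u := by
    rw [l2_eq_norm, WithLp.toLp_ofLp]
    exact mul_norm_le_of_forall_re_inner_lt (𝕜 := ℂ) hδ fun z hz => by simpa [hf] using hball z hz
  refine ⟨w.ofLp, fun hw => ?_, fun x hx => hnorm.trans (hsep' x hx)⟩
  have := hsep' 0 (by simpa [l1] using hP)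
  rw [hw, reInner_zero_left] at this
  linarith

lemma exists_dual_feasible_le {x₀ : ι → ℂ} (hslater : l2 (A *ᵥ x₀ - b) < δ) {P : ℝ}
    (hopt : ∀ x, l2 (A *ᵥ x - b) ≤ δ → P ≤ l1 x) :
    ∃ y, linf (Aᴴ *ᵥ y) ≤ 1 ∧ P ≤ reInner b y - δ * l2 y := by
  rcases le_or_gt P 0 with hP | hP
  · exact ⟨0, by simp [linf], by simpa [reInner, l2, l2sq] using hP⟩
  have hδ : 0 < δ := (l2_nonneg _).trans_lt hslater
  obtain ⟨y, hy0, hy⟩ := exists_ne_zero_mul_l2_le_reInner A b δ hP hδ fun x hx => hopt x hx.le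
  set c := linf (Aᴴ *ᵥ y)
  have hgap : P * c ≤ reInner b y - δ * l2 y :=
    mul_linf_le_of_forall_l1_lt _ hP fun x hx => by
      have := hy x hx
      rw [reInner_sub_right, reInner_mulVec, reInner_comm y b] at this
      linarith
  -- If `Aᴴ y = 0`, the Slater point makes the dual value of `y` negative.
  have hc : 0 < c := by
    refine (linf_nonneg _).lt_of_ne' fun (hc0 : c = 0) => ?_
    have hval : reInner b y - δ * l2 y ≤ l1 x₀ * c + (l2 (A *ᵥ x₀ - b) - δ) * l2 y :=
      reInner_sub_mul_l2_le A b δ x₀ y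
    rw [hc0, mul_zero] at hval hgap
    nlinarith [l2_pos hy0]
  refine ⟨c⁻¹ • y, ?_, ?_⟩
  · rw [Matrix.mulVec_smul, linf_real_smul, abs_of_pos (inv_pos.2 hc), inv_mul_cancel₀ hc.ne']
  · rw [reInner_real_smul_right, l2_real_smul, abs_of_pos (inv_pos.2 hc)]
    calc P = c⁻¹ * (P * c) := by field_simp
      _ ≤ c⁻¹ * (reInner b y - δ * l2 y) := by gcongr
      _ = _ := by ring

end Duality

end BPDN

open BPDN in
theorem strong_duality_bpdelta_general {m n : ℕ} (A : Matrix (Fin m) (Fin n) ℂ) (b : Fin m → ℂ)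
    (δ : ℝ) (hslater : ∃ x0 : Fin n → ℂ, l2 (A.mulVec x0 - b) < δ) :
    ∃ xt : Fin n → ℂ,
      l2 (A.mulVec xt - b) ≤ δ ∧
      (∀ x : Fin n → ℂ, l2 (A.mulVec x - b) ≤ δ → l1 xt ≤ l1 x) ∧
      IsLUB {v : ℝ | ∃ y : Fin m → ℂ, linf (Aᴴ.mulVec y) ≤ 1 ∧
        v = reInner b y - δ * l2 y} (l1 xt) := by
  obtain ⟨x₀, hx₀⟩ := hslater
  have hclosed : IsClosed {x : Fin n → ℂ | l2 (A *ᵥ x - b) ≤ δ} :=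
    isClosed_le (continuous_l2.comp (by fun_prop)) continuous_const
  obtain ⟨xt, hxt, hmin⟩ := exists_isMinOn_l1 hclosed ⟨x₀, hx₀.le⟩
  refine ⟨xt, hxt, fun x hx => hmin hx, ?_, fun c hc => ?_⟩
  · rintro _ ⟨y, hy, rfl⟩
    exact weak_duality A b δ hxt hy
  · obtain ⟨y, hy, hle⟩ := exists_dual_feasible_le A b δ hx₀ fun x hx => hmin hx
    exact hle.trans (hc ⟨y, hy, rfl⟩)

/-- Strong duality between BP_delta and its dual (2.24) under the Slater condition;
the primal minimum is attained and equals the dual supremum. -/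
theorem strong_duality_bpdelta {m n : ℕ} (A : Matrix (Fin m) (Fin n) ℂ) (b : Fin m → ℂ)
    (δ : ℝ) (hδ : 0 < δ) (hslater : ∃ x0 : Fin n → ℂ, l2 (A.mulVec x0 - b) < δ) :
    ∃ xt : Fin n → ℂ,
      l2 (A.mulVec xt - b) ≤ δ ∧
      (∀ x : Fin n → ℂ, l2 (A.mulVec x - b) ≤ δ → l1 xt ≤ l1 x) ∧
      IsLUB {v : ℝ | ∃ y : Fin m → ℂ, linf (Aᴴ.mulVec y) ≤ 1 ∧
        v = reInner b y - δ * l2 y} (l1 xt) :=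
  strong_duality_bpdelta_general A b δ hslater
end

section
/- Let A ∈ ℂ^{m×n} satisfy A A* = I, let b ∈ ℂ^m, β > 0 and γ > 0. Consider the iteration: given (x^k, y^k), set z^{k+1} = P_{B₁^∞}(A*y^k + x^k/β), then y^{k+1} = A z^{k+1} − (A x^k − b)/β, then x^{k+1} = x^k − γβ(z^{k+1} − A*y^{k+1}). Then for every k ≥ 0, A x^{k+1} − b = (1−γ)(A x^k − b); consequently ‖A x^k − b‖₂ = |1−γ|^k · ‖A x^0 − b‖₂ for all k, so the residual decreases geometrically whenever 0 < γ < 2. -/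
open Filter Topology Matrix Finset

/-! Applying `A` to the `x`-update, the `z`-terms cancel because `A A* = I`, so whatever the
projection returns, one step multiplies the residual `A x - b` by `1 - γ`. -/

section Residual

variable {ι : Type*} [Fintype ι]

lemma l2_real_smul (r : ℝ) (v : ι → ℂ) : l2 (r • v) = |r| * l2 v := by
  have hsq : ∀ i, ‖(r • v) i‖ ^ 2 = r ^ 2 * ‖v i‖ ^ 2 := fun i => by
    rw [Pi.smul_apply, norm_smul, mul_pow, Real.norm_eq_abs, sq_abs]
  rw [l2, l2sq, Finset.sum_congr rfl fun i _ => hsq i, ← Finset.mul_sum,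
    Real.sqrt_mul (sq_nonneg r), Real.sqrt_sq_eq_abs, l2, l2sq]

lemma l2_eq_abs_pow_mul_of_succ_eq_smul {u : ℕ → ι → ℂ} {c : ℝ}
    (h : ∀ k, u (k + 1) = c • u k) (k : ℕ) : l2 (u k) = |c| ^ k * l2 (u 0) := by
  induction k with
  | zero => rw [pow_zero, one_mul]
  | succ k ih => rw [h k, l2_real_smul, ih, pow_succ, mul_comm _ |c|, mul_assoc]

end Residual

section DualADM

variable {m n : Type*} [Fintype m] [Fintype n] [DecidableEq m]

lemma mulVec_dualADM_step_sub {A : Matrix m n ℂ} {B : Matrix n m ℂ} (hAB : A * B = 1)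
    {β : ℝ} (hβ : β ≠ 0) (γ : ℝ) (b : m → ℂ) (x z : n → ℂ) :
    A *ᵥ (x - (γ * β) • (z - B *ᵥ (A *ᵥ z - (1 / β) • (A *ᵥ x - b)))) - b =
      (1 - γ) • (A *ᵥ x - b) := by
  have hright : ∀ w, A *ᵥ (B *ᵥ w) = w := fun w => by
    rw [mulVec_mulVec, hAB, one_mulVec]
  calc A *ᵥ (x - (γ * β) • (z - B *ᵥ (A *ᵥ z - (1 / β) • (A *ᵥ x - b)))) - b
      = (A *ᵥ x - b) - (γ * β) • ((1 / β) • (A *ᵥ x - b)) := by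
        rw [mulVec_sub, mulVec_smul, mulVec_sub, hright, sub_sub_cancel]; abel
    _ = (1 - γ) • (A *ᵥ x - b) := by
        rw [smul_smul, mul_assoc, mul_one_div_cancel hβ, mul_one, sub_smul, one_smul]

end DualADM

theorem dadm_bp_residual_geometric_general {m n : ℕ} (A : Matrix (Fin m) (Fin n) ℂ)
    (hA : A * Aᴴ = 1) (b : Fin m → ℂ) (β γ : ℝ) (hβ : 0 < β)
    (x : ℕ → Fin n → ℂ) (y : ℕ → Fin m → ℂ) (z : ℕ → Fin n → ℂ)
    (hy : ∀ k, y (k+1) = A.mulVec (z (k+1)) - (1/β) • (A.mulVec (x k) - b))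
    (hx : ∀ k, x (k+1) = x k - (γ * β) • (z (k+1) - Aᴴ.mulVec (y (k+1)))) :
    (∀ k : ℕ, A.mulVec (x (k+1)) - b = (1 - γ) • (A.mulVec (x k) - b)) ∧
    (∀ k : ℕ, l2 (A.mulVec (x k) - b) = |1 - γ| ^ k * l2 (A.mulVec (x 0) - b)) := by
  have hstep : ∀ k, A *ᵥ x (k + 1) - b = (1 - γ) • (A *ᵥ x k - b) := fun k => by
    rw [hx k, hy k]
    exact mulVec_dualADM_step_sub hA hβ.ne' γ b (x k) (z (k + 1))
  exact ⟨hstep, l2_eq_abs_pow_mul_of_succ_eq_smul (u := fun k => A *ᵥ x k - b) hstep⟩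

/-- For the dual ADM (2.31) applied to basis pursuit with AA* = I, the residual
satisfies A x^{k+1} − b = (1−γ)(A x^k − b), hence ‖A x^k − b‖₂ = |1−γ|^k ‖A x^0 − b‖₂. -/
theorem dadm_bp_residual_geometric {m n : ℕ} (A : Matrix (Fin m) (Fin n) ℂ)
    (hA : A * Aᴴ = 1) (b : Fin m → ℂ) (β γ : ℝ) (hβ : 0 < β) (hγ : 0 < γ)
    (x : ℕ → Fin n → ℂ) (y : ℕ → Fin m → ℂ) (z : ℕ → Fin n → ℂ)
    (hz : ∀ k, z (k+1) = projBox (Aᴴ.mulVec (y k) + (1/β) • x k))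
    (hy : ∀ k, y (k+1) = A.mulVec (z (k+1)) - (1/β) • (A.mulVec (x k) - b))
    (hx : ∀ k, x (k+1) = x k - (γ * β) • (z (k+1) - Aᴴ.mulVec (y (k+1)))) :
    (∀ k : ℕ, A.mulVec (x (k+1)) - b = (1 - γ) • (A.mulVec (x k) - b)) ∧
    (∀ k : ℕ, l2 (A.mulVec (x k) - b) = |1 - γ| ^ k * l2 (A.mulVec (x 0) - b)) :=
  dadm_bp_residual_geometric_general A hA b β γ hβ x y z hy hx
end

section
/- Let A ∈ ℂ^{m×n}, b ∈ ℂ^m and ν > 0. Define Â ∈ ℂ^{m×(n+m)} as the block matrix (A, νI)/√(1+ν²) and b̂ = ν b/√(1+ν²). Then: (i) for every x ∈ ℂ^n and r ∈ ℂ^m, A x + r = b if and only if Â(νx; r) = b̂, and ‖(νx; r)‖₁ = ν‖x‖₁ + ‖r‖₁; (ii) x ∈ ℂ^n minimizes ‖x‖₁ + (1/ν)‖A x − b‖₁ over ℂ^n if and only if x̂ = (νx; b − A x) minimizes ‖x̂‖₁ over {x̂ ∈ ℂ^{n+m} : Â x̂ = b̂}, and in that case ν·(‖x‖₁ + (1/ν)‖A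 x − b‖₁) equals min{‖x̂‖₁ : Â x̂ = b̂}; (iii) if A A* = I (m×m identity), then Â Â* = I. -/
open Filter Topology Matrix Finset

/-!
Writing `r = b - A x` for the residual, the map `x ↦ (ν x; b - A x)` is a bijection from `ℂⁿ`
onto the affine space `{x̂ : Â x̂ = b̂}`, since `Â (ν x; r) = ν (A x + r) / √(1 + ν²)`. Along this
bijection `‖x̂‖₁ = ν ‖x‖₁ + ‖A x - b‖₁`, which is `ν > 0` times the ℓ1/ℓ1 objective, so minimizers
correspond. Finally `Â Â* = (A A* + ν² I) / (1 + ν²)`, which is `I` when `A A* = I`.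
-/

section L1

variable {ι κ : Type*} [Fintype ι] [Fintype κ]

lemma l1_sumElim_smul {c : ℝ} (hc : 0 ≤ c) (x : ι → ℂ) (r : κ → ℂ) :
    l1 (Sum.elim (c • x) r) = c * l1 x + l1 r := by
  simp [l1, Fintype.sum_sum_type, abs_of_nonneg hc, Finset.mul_sum]

lemma l1_sub_comm (u v : ι → ℂ) : l1 (u - v) = l1 (v - u) := by
  simp only [l1, Pi.sub_apply, norm_sub_rev]

lemma l1_sumElim_smul_sub {ν : ℝ} (hν : 0 < ν) (A : Matrix κ ι ℂ) (b : κ → ℂ) (x : ι → ℂ) :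
    l1 (Sum.elim (ν • x) (b - A *ᵥ x)) = ν * (l1 x + 1 / ν * l1 (A *ᵥ x - b)) := by
  rw [l1_sumElim_smul hν.le, l1_sub_comm]
  field_simp

end L1

section Augmented

variable {m n : Type*} [Fintype n] [Fintype m] [DecidableEq m]

lemma smul_fromCols_mulVec_sumElim (A : Matrix m n ℂ) (c ν : ℝ) (x : n → ℂ) (r : m → ℂ) :
    (c⁻¹ • fromCols A ((ν : ℂ) • 1)) *ᵥ Sum.elim (ν • x) r = (ν / c) • (A *ᵥ x + r) := by
  rw [smul_mulVec, fromCols_mulVec_sumElim, smul_mulVec, one_mulVec, mulVec_smul]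
  ext i
  simp only [Pi.smul_apply, Pi.add_apply, Complex.real_smul, smul_eq_mul]
  push_cast
  ring

lemma smul_fromCols_mulVec_sumElim_eq_iff (A : Matrix m n ℂ) (b : m → ℂ) {c ν : ℝ}
    (hc : c ≠ 0) (hν : ν ≠ 0) (x : n → ℂ) (r : m → ℂ) :
    (c⁻¹ • fromCols A ((ν : ℂ) • 1)) *ᵥ Sum.elim (ν • x) r = (ν / c) • b ↔ A *ᵥ x + r = b := by
  rw [smul_fromCols_mulVec_sumElim]
  exact (smul_right_injective _ (div_ne_zero hν hc)).eq_iff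

lemma exists_eq_sumElim_of_smul_fromCols_mulVec_eq (A : Matrix m n ℂ) (b : m → ℂ) {c ν : ℝ}
    (hc : c ≠ 0) (hν : ν ≠ 0) {xh : n ⊕ m → ℂ}
    (hxh : (c⁻¹ • fromCols A ((ν : ℂ) • 1)) *ᵥ xh = (ν / c) • b) :
    ∃ x, xh = Sum.elim (ν • x) (b - A *ᵥ x) := by
  have hsplit : xh = Sum.elim (ν • ν⁻¹ • (xh ∘ Sum.inl)) (xh ∘ Sum.inr) := by
    rw [smul_inv_smul₀ hν, Sum.elim_comp_inl_inr]
  refine ⟨ν⁻¹ • (xh ∘ Sum.inl), ?_⟩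
  rw [hsplit, smul_fromCols_mulVec_sumElim_eq_iff A b hc hν] at hxh
  rw [← eq_sub_of_add_eq' hxh, ← hsplit]

omit [Fintype m] [DecidableEq m] in
lemma fromCols_mul_conjTranspose {l : Type*} [Fintype l] (A : Matrix m n ℂ) (B : Matrix m l ℂ) :
    fromCols A B * (fromCols A B)ᴴ = A * Aᴴ + B * Bᴴ := by
  rw [conjTranspose_fromCols_eq_fromRows_conjTranspose, fromCols_mul_fromRows]

lemma smul_fromCols_mul_conjTranspose_eq_one (A : Matrix m n ℂ) (hA : A * Aᴴ = 1) {c ν : ℝ}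
    (hc : c ^ 2 = 1 + ν ^ 2) :
    (c⁻¹ • fromCols A ((ν : ℂ) • (1 : Matrix m m ℂ))) *
      (c⁻¹ • fromCols A ((ν : ℂ) • (1 : Matrix m m ℂ)))ᴴ = 1 := by
  have hc0 : (c : ℂ) ≠ 0 := by
    rintro h
    rw [Complex.ofReal_eq_zero.mp h] at hc
    nlinarith
  have hc' : (c : ℂ) ^ 2 = 1 + (ν : ℂ) ^ 2 := by exact_mod_cast hc
  rw [conjTranspose_smul, star_trivial, Matrix.smul_mul, Matrix.mul_smul,
    fromCols_mul_conjTranspose, hA, conjTranspose_smul, conjTranspose_one, Matrix.smul_mul,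
    Matrix.mul_smul, one_mul, smul_smul, Complex.star_def, Complex.conj_ofReal]
  ext i j
  rcases eq_or_ne i j with rfl | h
  · simp only [Complex.coe_smul, Matrix.smul_apply, Matrix.add_apply, one_apply_eq, Complex.real_smul,
      mul_one, smul_add, Complex.ofReal_mul, Complex.ofReal_inv]
    field_simp
    exact hc'.symm
  · simp [one_apply_ne h]

lemma l1l1_min_iff_l1_min_on_fiber (A : Matrix m n ℂ) (b : m → ℂ) {c ν : ℝ}
    (hc : c ≠ 0) (hν : 0 < ν) (x : n → ℂ) :
    (∀ x', l1 x + 1 / ν * l1 (A *ᵥ x - b) ≤ l1 x' + 1 / ν * l1 (A *ᵥ x' - b)) ↔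
      ∀ xh, (c⁻¹ • fromCols A ((ν : ℂ) • (1 : Matrix m m ℂ))) *ᵥ xh = (ν / c) • b →
        l1 (Sum.elim (ν • x) (b - A *ᵥ x)) ≤ l1 xh := by
  constructor
  · intro hmin xh hxh
    obtain ⟨x', rfl⟩ := exists_eq_sumElim_of_smul_fromCols_mulVec_eq A b hc hν.ne' hxh
    rw [l1_sumElim_smul_sub hν, l1_sumElim_smul_sub hν]
    exact mul_le_mul_of_nonneg_left (hmin x') hν.le
  · intro hmin x'
    have hfeas := (smul_fromCols_mulVec_sumElim_eq_iff A b hc hν.ne' x' (b - A *ᵥ x')).mpr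
      (add_sub_cancel _ _)
    have h := hmin _ hfeas
    rw [l1_sumElim_smul_sub hν, l1_sumElim_smul_sub hν] at h
    exact le_of_mul_le_mul_left h hν

end Augmented

/-- Reformulation (3.2) of the ℓ1/ℓ1 model (1.6) as a basis pursuit problem. -/
theorem l1l1_as_bp {m n : ℕ} (A : Matrix (Fin m) (Fin n) ℂ) (b : Fin m → ℂ)
    (ν : ℝ) (hν : 0 < ν)
    (Ahat : Matrix (Fin m) (Fin n ⊕ Fin m) ℂ)
    (hAhat : Ahat = (Real.sqrt (1 + ν^2))⁻¹ •
      Matrix.fromCols A ((ν : ℂ) • (1 : Matrix (Fin m) (Fin m) ℂ)))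
    (bhat : Fin m → ℂ) (hbhat : bhat = (ν / Real.sqrt (1 + ν^2)) • b) :
    (∀ (x : Fin n → ℂ) (r : Fin m → ℂ),
      (A.mulVec x + r = b ↔ Ahat.mulVec (Sum.elim (ν • x) r) = bhat) ∧
      l1 (Sum.elim (ν • x) r) = ν * l1 x + l1 r) ∧
    (∀ x : Fin n → ℂ,
      ((∀ x' : Fin n → ℂ,
          l1 x + (1/ν) * l1 (A.mulVec x - b) ≤ l1 x' + (1/ν) * l1 (A.mulVec x' - b)) ↔
        (Ahat.mulVec (Sum.elim (ν • x) (b - A.mulVec x)) = bhat ∧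
          ∀ xh : Fin n ⊕ Fin m → ℂ, Ahat.mulVec xh = bhat →
            l1 (Sum.elim (ν • x) (b - A.mulVec x)) ≤ l1 xh)) ∧
      ((∀ x' : Fin n → ℂ,
          l1 x + (1/ν) * l1 (A.mulVec x - b) ≤ l1 x' + (1/ν) * l1 (A.mulVec x' - b)) →
        ν * (l1 x + (1/ν) * l1 (A.mulVec x - b)) =
          l1 (Sum.elim (ν • x) (b - A.mulVec x)))) ∧
    (A * Aᴴ = 1 → Ahat * Ahatᴴ = 1) := by
  subst hAhat hbhat
  have hc : Real.sqrt (1 + ν ^ 2) ^ 2 = 1 + ν ^ 2 := Real.sq_sqrt (by positivity)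
  have hc0 : Real.sqrt (1 + ν ^ 2) ≠ 0 := (Real.sqrt_pos.mpr (by positivity)).ne'
  have hfeas : ∀ x r, A *ᵥ x + r = b ↔ _ := fun x r =>
    (smul_fromCols_mulVec_sumElim_eq_iff A b hc0 hν.ne' x r).symm
  refine ⟨fun x r => ⟨hfeas x r, l1_sumElim_smul hν.le x r⟩, fun x => ⟨?_, fun _ => ?_⟩,
    fun hA => smul_fromCols_mul_conjTranspose_eq_one A hA hc⟩
  · rw [l1l1_min_iff_l1_min_on_fiber A b hc0 hν x]
    exact ⟨fun hmin => ⟨(hfeas x _).mp (add_sub_cancel _ _), hmin⟩, And.right⟩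
  · exact (l1_sumElim_smul_sub hν A b x).symm
end
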